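/- Let K be a weakly non-commutative Valdivia compact space and let L ⊆ K be a subset which is the closure of a union of an arbitrary family of G_δ subsets of K. Then L, with the subspace topology, is a weakly non-commutative Valdivia compact space. -/

import Mathlib

open Filter Topology Set

universe u

section Defs

/-- A space is countably compact if every countable open cover has a finite subcover. -/
def CountablyCompact (X : Type u) [TopologicalSpace X] : Prop :=
  ∀ U : ℕ → Set X, (∀ n, IsOpen (U n)) → (⋃ n, U n) = Set.univ →
    ∃ t : Finset ℕ, (⋃ n ∈ t, U n) = Set.univ

variable {X : Type u} [TopologicalSpace X]

/-- A retractional skeleton on a topological space `X`. -/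
structure IsRetractionalSkeleton {Γ : Type u} [PartialOrder Γ] (r : Γ → X → X) : Prop where
  nonempty : Nonempty Γ
  directed : ∀ s t : Γ, ∃ w, s ≤ w ∧ t ≤ w
  continuous : ∀ s, Continuous (r s)
  retraction : ∀ s, r s ∘ r s = r s
  compact_range : ∀ s, IsCompact (Set.range (r s))
  metrizable_range : ∀ s, TopologicalSpace.MetrizableSpace (Set.range (r s))
  comp_eq_of_le : ∀ s t, s ≤ t → r t ∘ r s = r s ∧ r s ∘ r t = r s
  seq_sup : ∀ u : ℕ → Γ, Monotone u →
    ∃ t, IsLUB (Set.range u) t ∧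
      ∀ x, Filter.Tendsto (fun n => r (u n) x) Filter.atTop (nhds (r t x))
  tendsto_id : ∀ x, Filter.Tendsto (fun s => r s x) Filter.atTop (nhds x)

/-- `X` admits a retractional skeleton (non-commutative Valdivia when `X` is compact). -/
def HasRetractionalSkeleton (X : Type u) [TopologicalSpace X] : Prop :=
  ∃ (Γ : Type u) (_ : PartialOrder Γ) (r : Γ → X → X), IsRetractionalSkeleton r

/-- `X` admits a full retractional skeleton. -/
def HasFullRetractionalSkeleton (X : Type u) [TopologicalSpace X] : Prop :=
  ∃ (Γ : Type u) (_ : PartialOrder Γ) (r : Γ → X → X),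
    IsRetractionalSkeleton r ∧ ∀ x : X, ∃ s, x ∈ Set.range (r s)

/-- A non-commutative Corson countably compact space. -/
def IsNCCorson (X : Type u) [TopologicalSpace X] : Prop :=
  CountablyCompact X ∧ HasFullRetractionalSkeleton X

/-- A weakly non-commutative Corson countably compact space: a countably compact
continuous image of a non-commutative Corson countably compact space. -/
def IsWeaklyNCCorson (Y : Type u) [TopologicalSpace Y] : Prop :=
  CountablyCompact Y ∧
  ∃ (X : Type u) (_ : TopologicalSpace X) (_ : T2Space X) (_ : CompletelyRegularSpace X),
    IsNCCorson X ∧ ∃ f : X → Y, Continuous f ∧ Function.Surjective f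

/-- A weakly non-commutative Valdivia compact space: a compact space with a dense
countably compact subspace which is weakly non-commutative Corson. -/
def IsWeaklyNCValdivia (K : Type u) [TopologicalSpace K] : Prop :=
  CompactSpace K ∧ ∃ D : Set K, Dense D ∧ IsWeaklyNCCorson ↥D

end Defs

/-! Every nonempty `Gδ` set meets a dense countably compact set `D` of a regular space: nest
closed neighbourhoods inside the open sets defining it and take a cluster point in `D` of a
sequence chosen from their interiors. Hence `D ∩ L` is dense in `L`, and it is a closed subspace
of `D`. A weakly non-commutative Corson structure passes to closed subspaces because a full
retractional skeleton does: for a closed `C`, the indices `t` with `r t '' C ⊆ C` are cofinal.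
Starting from `a`, alternately pick a countable `Q ⊆ C` with `r a '' C ⊆ closure (r a '' Q)`
(the range of `r a` is compact metrizable) and, by fullness, a larger index whose range contains
`Q`. At the supremum `t` of this chain the compact range of `r t` embeds into the product of the
earlier retractions, so `r t x` is a limit of points of the sets `Q` for every `x ∈ C`. -/

section CountablyCompact

variable {X Y : Type u} [TopologicalSpace X] [TopologicalSpace Y]

theorem CountablyCompact.of_isClosedEmbedding {e : X → Y} (hY : CountablyCompact Y)
    (he : IsClosedEmbedding e) : CountablyCompact X := by
  intro U hU hcover
  choose V hV hVU using fun n => he.isInducing.isOpen_iff.1 (hU n)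
  obtain ⟨t, ht⟩ := hY (fun n => V n ∪ (range e)ᶜ)
    (fun n => (hV n).union he.isClosed_range.isOpen_compl) <| by
      refine eq_univ_of_forall fun y => ?_
      by_cases hy : y ∈ range e
      · obtain ⟨x, rfl⟩ := hy
        obtain ⟨n, hn⟩ := mem_iUnion.1 (hcover ▸ mem_univ x)
        exact mem_iUnion.2 ⟨n, Or.inl (by rw [← hVU n] at hn; exact hn)⟩
      · exact mem_iUnion.2 ⟨0, Or.inr hy⟩
  refine ⟨t, eq_univ_of_forall fun x => ?_⟩
  obtain ⟨n, hn, hx⟩ := mem_iUnion₂.1 (ht ▸ mem_univ (e x))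
  have hxV : e x ∈ V n := hx.resolve_right (not_not.2 (mem_range_self x))
  exact mem_iUnion₂.2 ⟨n, hn, by rw [← hVU n]; exact hxV⟩

theorem CountablyCompact.exists_forall_mem_closure_image_Ici (hX : CountablyCompact X)
    (u : ℕ → X) : ∃ x, ∀ N, x ∈ closure (u '' Ici N) := by
  by_contra! h
  obtain ⟨t, ht⟩ := hX (fun N => (closure (u '' Ici N))ᶜ) (fun _ => isClosed_closure.isOpen_compl)
    (eq_univ_of_forall fun x => mem_iUnion.2 (h x))
  obtain ⟨n, hn, hun⟩ := mem_iUnion₂.1 (ht ▸ mem_univ (u (t.sup id)))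
  exact hun (subset_closure ⟨t.sup id, Finset.le_sup (f := id) hn, rfl⟩)

end CountablyCompact

section Gdelta

variable {X : Type u} [TopologicalSpace X] [RegularSpace X] {D : Set X}

theorem IsGδ.inter_nonempty_of_dense_countablyCompact {G : Set X} (hG : IsGδ G)
    (hGne : G.Nonempty) (hD : Dense D) (hDcc : CountablyCompact D) : (G ∩ D).Nonempty := by
  obtain ⟨U, hU, rfl⟩ := hG.eq_iInter_nat
  obtain ⟨p, hp⟩ := hGne
  rw [mem_iInter] at hp
  choose C hC hCc hCU using fun n => exists_mem_nhds_isClosed_subset ((hU n).mem_nhds (hp n))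
  set W : ℕ → Set X := fun n => interior (⋂ k ∈ Iic n, C k)
  have hW : ∀ n, p ∈ W n := fun n =>
    mem_interior_iff_mem_nhds.2 ((biInter_mem (finite_Iic n)).2 fun k _ => hC k)
  choose d hdD hdW using fun n => hD.exists_mem_open isOpen_interior ⟨p, hW n⟩
  obtain ⟨y, hy⟩ := hDcc.exists_forall_mem_closure_image_Ici fun n => (⟨d n, hdD n⟩ : D)
  refine ⟨y, mem_iInter.2 fun N => hCU N ?_, y.2⟩
  have hyW : (y : X) ∈ closure (W N) := by
    refine map_mem_closure continuous_subtype_val (hy N) ?_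
    rintro _ ⟨n, hn, rfl⟩
    exact interior_mono (biInter_subset_biInter_left (Iic_subset_Iic.2 hn)) (hdW n)
  exact closure_minimal (interior_subset.trans (biInter_subset_of_mem (mem_Iic.2 le_rfl)))
    (hCc N) hyW

theorem IsGδ.subset_closure_inter_of_dense_countablyCompact {G : Set X} (hG : IsGδ G)
    (hD : Dense D) (hDcc : CountablyCompact D) : G ⊆ closure (G ∩ D) := fun x hx =>
  mem_closure_iff.2 fun o ho hxo => by
    simpa only [inter_assoc] using
      (ho.isGδ.inter hG).inter_nonempty_of_dense_countablyCompact ⟨x, hxo, hx⟩ hD hDcc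

theorem Dense.preimage_closure_iUnion_isGδ {ι : Sort*} {Z : ι → Set X} (hD : Dense D)
    (hDcc : CountablyCompact D) (hZ : ∀ i, IsGδ (Z i)) :
    Dense (Subtype.val ⁻¹' D : Set (closure (⋃ i, Z i))) := by
  rw [Subtype.dense_iff, Subtype.image_preimage_coe]
  refine closure_minimal (iUnion_subset fun i => ?_) isClosed_closure
  refine ((hZ i).subset_closure_inter_of_dense_countablyCompact hD hDcc).trans (closure_mono ?_)
  exact inter_subset_inter_left _ ((subset_iUnion Z i).trans subset_closure)

end Gdelta

namespace IsRetractionalSkeleton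

variable {X : Type u} [TopologicalSpace X] {Γ : Type u} [PartialOrder Γ] {r : Γ → X → X}

theorem mem_range_iff (hsk : IsRetractionalSkeleton r) {s : Γ} {x : X} :
    x ∈ range (r s) ↔ r s x = x :=
  ⟨by rintro ⟨y, rfl⟩; exact congrFun (hsk.retraction s) y, fun h => ⟨x, h⟩⟩

theorem apply_apply_of_le (hsk : IsRetractionalSkeleton r) {s t : Γ} (hst : s ≤ t) (x : X) :
    r s (r t x) = r s x :=
  congrFun (hsk.comp_eq_of_le s t hst).2 x

theorem range_subset_of_le (hsk : IsRetractionalSkeleton r) {s t : Γ} (hst : s ≤ t) :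
    range (r s) ⊆ range (r t) := by
  rintro _ ⟨x, rfl⟩
  exact ⟨r s x, congrFun (hsk.comp_eq_of_le s t hst).1 x⟩

theorem bddAbove_range_nat (hsk : IsRetractionalSkeleton r) (c : ℕ → Γ) :
    BddAbove (range c) := by
  choose w hw₁ hw₂ using hsk.directed
  let v : ℕ → Γ := fun n => Nat.rec (c 0) (fun n vn => w vn (c (n + 1))) n
  obtain ⟨t, ht, -⟩ := hsk.seq_sup v (monotone_nat_of_le_succ fun n => hw₁ _ _)
  refine ⟨t, forall_mem_range.2 fun n => le_trans ?_ (ht.1 ⟨n, rfl⟩)⟩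
  cases n with
  | zero => exact le_rfl
  | succ n => exact hw₂ _ _

theorem bddAbove_range_of_countable (hsk : IsRetractionalSkeleton r) {ι : Type*} [Countable ι]
    (c : ι → Γ) : BddAbove (range c) := by
  cases isEmpty_or_nonempty ι
  · have := hsk.nonempty
    simp [range_eq_empty]
  · obtain ⟨e, he⟩ := exists_surjective_nat ι
    rw [← he.range_comp]
    exact hsk.bddAbove_range_nat (c ∘ e)

theorem exists_le_subset_range (hsk : IsRetractionalSkeleton r)
    (hfull : ∀ x : X, ∃ s, x ∈ range (r s)) {Q : Set X} (hQ : Q.Countable) (a : Γ) :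
    ∃ b, a ≤ b ∧ Q ⊆ range (r b) := by
  choose σ hσ using hfull
  have := hQ.to_subtype
  obtain ⟨b, hb⟩ := hsk.bddAbove_range_of_countable fun o : Option Q => o.elim a (σ ·)
  exact ⟨b, hb ⟨none, rfl⟩, fun x hx => hsk.range_subset_of_le (hb ⟨some ⟨x, hx⟩, rfl⟩) (hσ x)⟩

theorem exists_countable_subset_image_subset_closure (hsk : IsRetractionalSkeleton r) (a : Γ)
    (A : Set X) : ∃ Q ⊆ A, Q.Countable ∧ r a '' A ⊆ closure (r a '' Q) := by
  have : CompactSpace (range (r a)) := isCompact_iff_compactSpace.1 (hsk.compact_range a)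
  have := hsk.metrizable_range a
  have : SecondCountableTopology (r a '' A) :=
    (IsEmbedding.inclusion (image_subset_range (r a) A)).secondCountableTopology
  obtain ⟨E, hEc, hEd⟩ := TopologicalSpace.exists_countable_dense (r a '' A)
  choose g hgA hg using fun y : r a '' A => y.2
  refine ⟨g '' E, image_subset_iff.2 fun y _ => hgA y, hEc.image g, ?_⟩
  refine (Subtype.dense_iff.1 hEd).trans (closure_mono ?_)
  rintro _ ⟨y, hy, rfl⟩
  exact ⟨g y, mem_image_of_mem g hy, hg y⟩

theorem range_restrict (hsk : IsRetractionalSkeleton r) {C : Set X} {s : Γ}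
    (hs : MapsTo (r s) C C) : range (hs.restrict (r s) C C) = Subtype.val ⁻¹' range (r s) := by
  ext x
  refine ⟨by rintro ⟨y, rfl⟩; exact mem_range_self _, fun hx => ⟨x, ?_⟩⟩
  exact Subtype.ext (hsk.mem_range_iff.1 hx)

theorem restrict (hsk : IsRetractionalSkeleton r) {C : Set X} (hC : IsClosed C)
    (hcof : ∀ a, ∃ t, a ≤ t ∧ MapsTo (r t) C C) :
    IsRetractionalSkeleton fun s : {s // MapsTo (r s) C C} => s.2.restrict (r s) C C where
  nonempty :=
    let ⟨a⟩ := hsk.nonempty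
    let ⟨t, _, ht⟩ := hcof a
    ⟨⟨t, ht⟩⟩
  directed s t := by
    obtain ⟨w, hsw, htw⟩ := hsk.directed s t
    obtain ⟨w', hww', hw'⟩ := hcof w
    exact ⟨⟨w', hw'⟩, hsw.trans hww', htw.trans hww'⟩
  continuous s := ((hsk.continuous s).comp continuous_subtype_val).subtype_mk _
  retraction s := funext fun x => Subtype.ext (congrFun (hsk.retraction s) x)
  compact_range s := by
    rw [hsk.range_restrict]
    exact hC.isClosedEmbedding_subtypeVal.isCompact_preimage (hsk.compact_range s)
  metrizable_range s := by
    have := hsk.metrizable_range s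
    rw [hsk.range_restrict]
    exact (IsEmbedding.subtypeVal.restrictPreimage _).metrizableSpace
  comp_eq_of_le s t hst :=
    ⟨funext fun x => Subtype.ext (congrFun (hsk.comp_eq_of_le s t hst).1 x),
      funext fun x => Subtype.ext (congrFun (hsk.comp_eq_of_le s t hst).2 x)⟩
  seq_sup u hu := by
    obtain ⟨t, hlub, ht⟩ := hsk.seq_sup (fun n => u n) hu
    have htC : MapsTo (r t) C C := fun x hx =>
      hC.mem_of_tendsto (ht x) (Eventually.of_forall fun n => (u n).2 hx)
    refine ⟨⟨t, htC⟩, ⟨?_, fun b hb => hlub.2 ?_⟩, fun x => tendsto_subtype_rng.2 (ht x)⟩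
    · exact forall_mem_range.2 fun n => hlub.1 ⟨n, rfl⟩
    · exact forall_mem_range.2 fun n => hb ⟨n, rfl⟩
  tendsto_id x := by
    refine tendsto_subtype_rng.2 ((hsk.tendsto_id x).comp ?_)
    refine tendsto_atTop_atTop_of_monotone (fun _ _ h => h) fun a => ?_
    obtain ⟨t, hat, ht⟩ := hcof a
    exact ⟨⟨t, ht⟩, hat⟩

variable [T2Space X]

theorem isEmbedding_range_pi (hsk : IsRetractionalSkeleton r) {s : ℕ → Γ} {t : Γ}
    (ht : ∀ x, Tendsto (fun n => r (s n) x) atTop (𝓝 (r t x))) :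
    IsEmbedding fun (z : range (r t)) (n : ℕ) => r (s n) z := by
  have : CompactSpace (range (r t)) := isCompact_iff_compactSpace.1 (hsk.compact_range t)
  have hz : ∀ z : range (r t), Tendsto (fun n => r (s n) z) atTop (𝓝 z) := fun z => by
    simpa only [hsk.mem_range_iff.1 z.2] using ht z
  refine (Continuous.isClosedEmbedding ?_ fun z z' h => Subtype.ext ?_).isEmbedding
  · exact continuous_pi fun n => (hsk.continuous (s n)).comp continuous_subtype_val
  · exact tendsto_nhds_unique (hz z) (h ▸ hz z')

theorem exists_mem_nhds_preimage_subset (hsk : IsRetractionalSkeleton r) {s : ℕ → Γ}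
    (hs : Monotone s) {t : Γ} (hst : ∀ n, s n ≤ t)
    (ht : ∀ x, Tendsto (fun n => r (s n) x) atTop (𝓝 (r t x))) (x : X) {o : Set X}
    (ho : o ∈ 𝓝 (r t x)) : ∃ N, ∃ O ∈ 𝓝 (r (s N) x), range (r t) ∩ r (s N) ⁻¹' O ⊆ o := by
  have hy : Subtype.val ⁻¹' o ∈ 𝓝 (⟨r t x, mem_range_self x⟩ : range (r t)) :=
    continuous_subtype_val.continuousAt.preimage_mem_nhds ho
  rw [(hsk.isEmbedding_range_pi ht).isInducing.nhds_eq_comap, nhds_pi] at hy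
  obtain ⟨W, hW, hWo⟩ := mem_comap.1 hy
  obtain ⟨I, V, hV, hIV⟩ := Filter.mem_pi'.1 hW
  have hle : ∀ m ∈ I, s m ≤ s (I.sup id) := fun m hm => hs (Finset.le_sup (f := id) hm)
  refine ⟨I.sup id, ⋂ m ∈ I, r (s m) ⁻¹' V m, (biInter_finset_mem I).2 fun m hm => ?_, ?_⟩
  · refine (hsk.continuous (s m)).continuousAt.preimage_mem_nhds ?_
    rw [hsk.apply_apply_of_le (hle m hm), ← hsk.apply_apply_of_le (hst m)]
    exact hV m
  · rintro z ⟨hzt, hz⟩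
    refine @hWo ⟨z, hzt⟩ (hIV fun m hm => ?_)
    simpa only [mem_preimage, hsk.apply_apply_of_le (hle m hm)] using mem_iInter₂.1 hz m hm

theorem exists_le_mapsTo_of_isClosed (hsk : IsRetractionalSkeleton r)
    (hfull : ∀ x : X, ∃ s, x ∈ range (r s)) {C : Set X} (hC : IsClosed C) (a : Γ) :
    ∃ t, a ≤ t ∧ MapsTo (r t) C C := by
  have step : ∀ a, ∃ b, a ≤ b ∧ ∃ Q ⊆ C, r a '' C ⊆ closure (r a '' Q) ∧ Q ⊆ range (r b) :=
    fun a => by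
      obtain ⟨Q, hQC, hQc, hQd⟩ := hsk.exists_countable_subset_image_subset_closure a C
      obtain ⟨b, hab, hQb⟩ := hsk.exists_le_subset_range hfull hQc a
      exact ⟨b, hab, Q, hQC, hQd, hQb⟩
  choose next hle Q hQC hQd hQr using step
  set s : ℕ → Γ := fun n => next^[n] a
  have hs_succ : ∀ n, s (n + 1) = next (s n) := fun n => Function.iterate_succ_apply' next n a
  have hs : Monotone s := monotone_nat_of_le_succ fun n => (hs_succ n).symm ▸ hle (s n)
  obtain ⟨t, hlub, ht⟩ := hsk.seq_sup s hs
  have hst : ∀ n, s n ≤ t := fun n => hlub.1 ⟨n, rfl⟩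
  refine ⟨t, hst 0, fun x hx => (hC.closure_subset_iff.2 (iUnion_subset fun n => hQC (s n))) ?_⟩
  rw [mem_closure_iff_nhds]
  intro o ho
  obtain ⟨N, O, hO, hOo⟩ := hsk.exists_mem_nhds_preimage_subset hs hst ht x ho
  obtain ⟨_, hqO, q, hq, rfl⟩ := mem_closure_iff_nhds.1 (hQd (s N) (mem_image_of_mem _ hx)) O hO
  have hqt : q ∈ range (r t) := hsk.range_subset_of_le (hst (N + 1)) (hs_succ N ▸ hQr (s N) hq)
  exact ⟨q, hOo ⟨hqt, hqO⟩, mem_iUnion.2 ⟨N, hq⟩⟩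

end IsRetractionalSkeleton

section Subspace

variable {X : Type u} [TopologicalSpace X]

theorem HasFullRetractionalSkeleton.subtype_of_isClosed [T2Space X]
    (h : HasFullRetractionalSkeleton X) {C : Set X} (hC : IsClosed C) :
    HasFullRetractionalSkeleton C := by
  obtain ⟨Γ, _, r, hsk, hfull⟩ := h
  have hcof := hsk.exists_le_mapsTo_of_isClosed hfull hC
  refine ⟨_, inferInstance, _, hsk.restrict hC hcof, fun x => ?_⟩
  obtain ⟨s, hs⟩ := hfull x
  obtain ⟨t, hst, ht⟩ := hcof s
  refine ⟨⟨t, ht⟩, ?_⟩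
  rw [hsk.range_restrict ht]
  exact hsk.range_subset_of_le hst hs

theorem IsNCCorson.subtype_of_isClosed [T2Space X] (h : IsNCCorson X) {C : Set X}
    (hC : IsClosed C) : IsNCCorson C :=
  ⟨h.1.of_isClosedEmbedding hC.isClosedEmbedding_subtypeVal, h.2.subtype_of_isClosed hC⟩

theorem IsWeaklyNCCorson.of_isClosedEmbedding {Y : Type u} [TopologicalSpace Y] {e : Y → X}
    (hX : IsWeaklyNCCorson X) (he : IsClosedEmbedding e) : IsWeaklyNCCorson Y := by
  obtain ⟨hXcc, Z, _, _, _, hZ, f, hf, hfs⟩ := hX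
  have hC : IsClosed (f ⁻¹' range e) := he.isClosed_range.preimage hf
  choose g hg using fun z : f ⁻¹' range e => z.2
  refine ⟨hXcc.of_isClosedEmbedding he, _, inferInstance, inferInstance, inferInstance,
    hZ.subtype_of_isClosed hC, g, ?_, fun y => ?_⟩
  · rw [he.isInducing.continuous_iff, show e ∘ g = f ∘ Subtype.val from funext hg]
    exact hf.comp continuous_subtype_val
  · obtain ⟨z, hz⟩ := hfs (e y)
    exact ⟨⟨z, y, hz.symm⟩, he.injective ((hg _).trans hz)⟩

end Subspace

/-- In a weakly non-commutative Valdivia compact space, the closure of a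
union of an arbitrary family of G-delta subsets is weakly non-commutative Valdivia. -/
theorem closure_iUnion_Gdelta_of_weaklyNCValdivia
    {K : Type u} [TopologicalSpace K] [T2Space K]
    (hK : IsWeaklyNCValdivia K) (L : Set K)
    (hL : ∃ (ι : Type u) (Z : ι → Set K), (∀ i, IsGδ (Z i)) ∧ L = closure (⋃ i, Z i)) :
    IsWeaklyNCValdivia ↥L := by
  obtain ⟨hKc, D, hD, hDw⟩ := hK
  obtain ⟨ι, Z, hZ, rfl⟩ := hL
  have hLc : IsClosed (closure (⋃ i, Z i)) := isClosed_closure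
  exact ⟨isCompact_iff_compactSpace.1 hLc.isCompact, _, hD.preimage_closure_iUnion_isGδ hDw.1 hZ,
    hDw.of_isClosedEmbedding
      (D.restrictPreimage_isClosedEmbedding hLc.isClosedEmbedding_subtypeVal)⟩
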